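/- For every odd k ≥ 1, the discrepancy of the Sylvester–Hadamard matrix H_k satisfies √(2^k) ≤ disc(H_k) ≤ √2 · √(2^k) = 2^{(k+1)/2}, the upper bound being witnessed by the sign vector x♮_(k). -/

import Mathlib

/-!
For a sign vector `x`, orthogonality of the columns (`Hₖᵀ Hₖ = 2ᵏ I`) gives
`‖Hₖ x‖₂² = 2ᵏ ‖x‖₂² = 4ᵏ`, and a vector with `2ᵏ` coordinates has sup norm at least its
Euclidean norm divided by `√(2ᵏ)`; hence `‖Hₖ x‖_∞ ≥ √(2ᵏ)`.

For the upper bound, `x♮ (k+2) = (x, x, x, −x)` with `x = x♮ k`. Since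
`H (k+1) (u, v) = (Hₖ u + Hₖ v, Hₖ u − Hₖ v)`, this gives
`H (k+2) x♮ (k+2) = (2w, 2w, 2w, −2w)` with `w = Hₖ x♮ k`: the sup norm doubles every two
steps, starting from `H₁ (1, 1) = (2, 0)`.
-/

open scoped Matrix

/-- Canonical identification `Fin 2ᵏ ⊕ Fin 2ᵏ ≃ Fin 2ᵏ⁺¹` (first summand = first half). -/
def sumEquiv (k : ℕ) : Fin (2 ^ k) ⊕ Fin (2 ^ k) ≃ Fin (2 ^ (k + 1)) :=
  finSumFinEquiv.trans (finCongr (by rw [pow_succ]; ring))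

/-- The Sylvester–Hadamard matrices: `H 0 = (1)` and
`H (k+1) = [[H k, H k], [H k, −H k]]` (a `2ᵏ × 2ᵏ` matrix with `±1` entries). -/
def sylvesterHadamard : (k : ℕ) → Matrix (Fin (2 ^ k)) (Fin (2 ^ k)) ℝ
  | 0 => fun _ _ => 1
  | k + 1 =>
    Matrix.reindex (sumEquiv k) (sumEquiv k)
      (Matrix.fromBlocks (sylvesterHadamard k) (sylvesterHadamard k)
        (sylvesterHadamard k) (-(sylvesterHadamard k)))

/-- Canonical identification `Fin 2² × Fin 2ᵏ ≃ Fin 2ᵏ⁺²` (first factor most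
significant), under which `H (k+2) = H 2 ⊗ H k` as a Kronecker product. -/
def prodEquiv (k : ℕ) : Fin (2 ^ 2) × Fin (2 ^ k) ≃ Fin (2 ^ (k + 2)) :=
  finProdFinEquiv.trans (finCongr (by rw [← pow_add, Nat.add_comm]))

/-- The vector `y = (1, 1, 1, −1)`. -/
def ySign : Fin (2 ^ 2) → ℝ := ![1, 1, 1, -1]

/-- The sign vectors `x♮`: `x♮ 0 = (1)`, `x♮ 1 = (1, 1)` and `x♮ (k+2) = y ⊗ x♮ k`
(Kronecker product of vectors, via the canonical identification `prodEquiv`). -/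
def xNat : (k : ℕ) → (Fin (2 ^ k) → ℝ)
  | 0 => fun _ => 1
  | 1 => fun _ => 1
  | k + 2 => fun i =>
      ySign ((prodEquiv k).symm i).1 * xNat k ((prodEquiv k).symm i).2

/-- `x` is a sign vector: all its entries are `±1`. -/
def IsSignVec {n : ℕ} (x : Fin n → ℝ) : Prop := ∀ i, x i = 1 ∨ x i = -1

lemma dotProduct_self_le_card_mul_norm_sq {ι : Type*} [Fintype ι] (b : ι → ℝ) :
    b ⬝ᵥ b ≤ Fintype.card ι * ‖b‖ ^ 2 := by
  calc b ⬝ᵥ b = ∑ i, b i ^ 2 := by simp [dotProduct, sq]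
    _ ≤ ∑ _i : ι, ‖b‖ ^ 2 := Finset.sum_le_sum fun i _ => by
        simpa only [Real.norm_eq_abs, sq_abs] using
          pow_le_pow_left₀ (norm_nonneg _) (norm_le_pi_norm b i) 2
    _ = Fintype.card ι * ‖b‖ ^ 2 := by simp

lemma IsSignVec.dotProduct_self {n : ℕ} {x : Fin n → ℝ} (hx : IsSignVec x) :
    x ⬝ᵥ x = n := by
  have hsq : ∀ i, x i * x i = 1 := fun i => by rcases hx i with h | h <;> simp [h]
  simp [dotProduct, hsq]

lemma IsSignVec.sqrt_le_norm_mulVec {n : ℕ} [NeZero n] {A : Matrix (Fin n) (Fin n) ℝ} {c : ℝ}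
    (hA : Aᵀ * A = c • 1) {x : Fin n → ℝ} (hx : IsSignVec x) :
    √c ≤ ‖A *ᵥ x‖ := by
  have hn : (0 : ℝ) < n := by exact_mod_cast Nat.pos_of_neZero n
  have hAx : (A *ᵥ x) ⬝ᵥ (A *ᵥ x) = c * n := by
    rw [Matrix.dotProduct_mulVec, ← Matrix.mulVec_transpose, Matrix.mulVec_mulVec, hA,
      Matrix.smul_mulVec, Matrix.one_mulVec, smul_dotProduct, hx.dotProduct_self, smul_eq_mul]
  have hc : c ≤ ‖A *ᵥ x‖ ^ 2 := by
    have := dotProduct_self_le_card_mul_norm_sq (A *ᵥ x)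
    rw [hAx, Fintype.card_fin, mul_comm] at this
    exact le_of_mul_le_mul_left this hn
  exact Real.sqrt_le_iff.2 ⟨norm_nonneg _, hc⟩

lemma transpose_sylvesterHadamard_mul_self :
    ∀ k, (sylvesterHadamard k)ᵀ * sylvesterHadamard k = (2 ^ k : ℝ) • 1
  | 0 => by
    ext i j
    obtain rfl : i = j := Fin.ext (by omega)
    rw [Matrix.mul_apply]
    simp [sylvesterHadamard]
    rfl
  | k + 1 => by
    have ih := transpose_sylvesterHadamard_mul_self k
    rw [sylvesterHadamard, Matrix.reindex_apply, Matrix.transpose_submatrix,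
      Matrix.submatrix_mul_equiv, Matrix.fromBlocks_transpose, Matrix.fromBlocks_multiply]
    simp only [Matrix.transpose_neg, Matrix.mul_neg, Matrix.neg_mul, neg_neg, ih,
      add_neg_cancel, ← two_smul ℝ ((2 : ℝ) ^ k • _), smul_smul, ← pow_succ']
    have hblocks : Matrix.fromBlocks ((2 : ℝ) ^ (k + 1) • 1) 0 0 ((2 : ℝ) ^ (k + 1) • 1) =
        ((2 : ℝ) ^ (k + 1) • 1 :
          Matrix (Fin (2 ^ k) ⊕ Fin (2 ^ k)) (Fin (2 ^ k) ⊕ Fin (2 ^ k)) ℝ) := by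
      rw [← Matrix.fromBlocks_one, Matrix.fromBlocks_smul, smul_zero]
    simp only [hblocks, Matrix.submatrix_smul, Pi.smul_apply, Matrix.submatrix_one_equiv]

def appendVec (k : ℕ) (u v : Fin (2 ^ k) → ℝ) : Fin (2 ^ (k + 1)) → ℝ :=
  Sum.elim u v ∘ (sumEquiv k).symm

@[simp]
lemma appendVec_inl (k : ℕ) (u v : Fin (2 ^ k) → ℝ) (i : Fin (2 ^ k)) :
    appendVec k u v (sumEquiv k (.inl i)) = u i := by
  simp [appendVec]

@[simp]
lemma appendVec_inr (k : ℕ) (u v : Fin (2 ^ k) → ℝ) (i : Fin (2 ^ k)) :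
    appendVec k u v (sumEquiv k (.inr i)) = v i := by
  simp [appendVec]

lemma appendVec_add_appendVec (k : ℕ) (u v u' v' : Fin (2 ^ k) → ℝ) :
    appendVec k u v + appendVec k u' v' = appendVec k (u + u') (v + v') := by
  ext i
  obtain ⟨s | s, rfl⟩ := (sumEquiv k).surjective i <;> simp

lemma appendVec_sub_appendVec (k : ℕ) (u v u' v' : Fin (2 ^ k) → ℝ) :
    appendVec k u v - appendVec k u' v' = appendVec k (u - u') (v - v') := by
  ext i
  obtain ⟨s | s, rfl⟩ := (sumEquiv k).surjective i <;> simp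

lemma norm_appendVec (k : ℕ) (u v : Fin (2 ^ k) → ℝ) :
    ‖appendVec k u v‖ = max ‖u‖ ‖v‖ := by
  refine le_antisymm ((pi_norm_le_iff_of_nonneg (by positivity)).2 fun i => ?_) (max_le ?_ ?_)
  · obtain ⟨s | s, rfl⟩ := (sumEquiv k).surjective i
    · simpa using (norm_le_pi_norm u s).trans (le_max_left _ _)
    · simpa using (norm_le_pi_norm v s).trans (le_max_right _ _)
  · refine (pi_norm_le_iff_of_nonneg (norm_nonneg _)).2 fun i => ?_
    simpa using norm_le_pi_norm (appendVec k u v) (sumEquiv k (.inl i))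
  · refine (pi_norm_le_iff_of_nonneg (norm_nonneg _)).2 fun i => ?_
    simpa using norm_le_pi_norm (appendVec k u v) (sumEquiv k (.inr i))

lemma sylvesterHadamard_succ_mulVec_appendVec (k : ℕ) (u v : Fin (2 ^ k) → ℝ) :
    sylvesterHadamard (k + 1) *ᵥ appendVec k u v =
      appendVec k (sylvesterHadamard k *ᵥ u + sylvesterHadamard k *ᵥ v)
        (sylvesterHadamard k *ᵥ u - sylvesterHadamard k *ᵥ v) := by
  rw [sylvesterHadamard, Matrix.reindex_apply, Matrix.submatrix_mulVec_equiv]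
  simp [appendVec, Function.comp_assoc, Matrix.fromBlocks_mulVec, sub_eq_add_neg,
    Matrix.neg_mulVec]

lemma isSignVec_xNat : ∀ k, IsSignVec (xNat k)
  | 0 => fun _ => Or.inl rfl
  | 1 => fun _ => Or.inl rfl
  | k + 2 => fun i => by
    have hy : IsSignVec ySign := fun a => by fin_cases a <;> simp [ySign]
    rcases hy ((prodEquiv k).symm i).1 with h | h <;>
      rcases isSignVec_xNat k ((prodEquiv k).symm i).2 with h' | h' <;> simp [xNat, h, h']

lemma xNat_add_two (k : ℕ) :
    xNat (k + 2) = appendVec (k + 1) (appendVec k (xNat k) (xNat k))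
      (appendVec k (xNat k) (-xNat k)) := by
  ext i
  obtain ⟨s | s, rfl⟩ := (sumEquiv (k + 1)).surjective i <;>
  obtain ⟨t | t, rfl⟩ := (sumEquiv k).surjective s <;>
  simp only [appendVec_inl, appendVec_inr, Pi.neg_apply] <;>
  simp [xNat, prodEquiv, sumEquiv, ySign, Fin.divNat, Fin.modNat, Nat.mod_eq_of_lt,
    Nat.div_eq_of_lt, pow_succ, Nat.add_mul_div_left _ _ (Nat.two_pow_pos k),
    Nat.add_div_right _ (Nat.two_pow_pos k)]

lemma norm_sylvesterHadamard_one_mulVec_xNat : ‖sylvesterHadamard 1 *ᵥ xNat 1‖ = 2 := by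
  have hx : xNat 1 = appendVec 0 1 1 := by
    ext i
    obtain ⟨s | s, rfl⟩ := (sumEquiv 0).surjective i <;>
      simp only [appendVec_inl, appendVec_inr] <;> rfl
  have h0 : sylvesterHadamard 0 *ᵥ 1 = 1 := by
    ext i
    simp [sylvesterHadamard, Matrix.mulVec, dotProduct]
  rw [hx, sylvesterHadamard_succ_mulVec_appendVec, h0, norm_appendVec, sub_self, norm_zero,
    max_eq_left (norm_nonneg _)]
  show ‖fun _ : Fin (2 ^ 0) => (1 + 1 : ℝ)‖ = 2
  rw [pi_norm_const, one_add_one_eq_two, Real.norm_two]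

lemma norm_sylvesterHadamard_mulVec_xNat_add_two (k : ℕ) :
    ‖sylvesterHadamard (k + 2) *ᵥ xNat (k + 2)‖ = 2 * ‖sylvesterHadamard k *ᵥ xNat k‖ := by
  set v := sylvesterHadamard k *ᵥ xNat k
  have hplus : sylvesterHadamard (k + 1) *ᵥ appendVec k (xNat k) (xNat k) =
      appendVec k ((2 : ℝ) • v) 0 := by
    rw [sylvesterHadamard_succ_mulVec_appendVec, two_smul, sub_self]
  have hminus : sylvesterHadamard (k + 1) *ᵥ appendVec k (xNat k) (-xNat k) =
      appendVec k 0 ((2 : ℝ) • v) := by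
    rw [sylvesterHadamard_succ_mulVec_appendVec, Matrix.mulVec_neg, add_neg_cancel,
      sub_neg_eq_add, two_smul]
  rw [xNat_add_two, sylvesterHadamard_succ_mulVec_appendVec, hplus, hminus,
    appendVec_add_appendVec, appendVec_sub_appendVec, norm_appendVec, norm_appendVec,
    norm_appendVec]
  simp only [add_zero, zero_add, sub_zero, zero_sub, norm_neg, max_self, norm_smul,
    Real.norm_two]

lemma norm_sylvesterHadamard_mulVec_xNat_odd :
    ∀ m, ‖sylvesterHadamard (2 * m + 1) *ᵥ xNat (2 * m + 1)‖ = 2 ^ (m + 1)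
  | 0 => by simpa using norm_sylvesterHadamard_one_mulVec_xNat
  | m + 1 => by
    rw [show 2 * (m + 1) + 1 = 2 * m + 1 + 2 by ring,
      norm_sylvesterHadamard_mulVec_xNat_add_two, norm_sylvesterHadamard_mulVec_xNat_odd m,
      pow_succ' 2 (m + 1)]

/-- For every odd `k ≥ 1` the discrepancy of the Sylvester–Hadamard matrix `H k`
satisfies `√(2ᵏ) ≤ disc(H k) ≤ √2·√(2ᵏ) = 2^{(k+1)/2}`: every sign vector
`x ∈ {±1}^{2ᵏ}` has `‖H k · x‖_∞ ≥ √(2ᵏ)`, and the sign vector `x♮ k` witnesses the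
upper bound `‖H k · x♮ k‖_∞ ≤ √2·√(2ᵏ)`.  (The norm on `Fin n → ℝ` is the sup
norm.) -/
theorem sylvesterHadamard_discrepancy_odd (k : ℕ) (hk : Odd k) :
    (∀ x : Fin (2 ^ k) → ℝ, IsSignVec x →
      Real.sqrt (2 ^ k) ≤ ‖(sylvesterHadamard k).mulVec x‖) ∧
    IsSignVec (xNat k) ∧
    ‖(sylvesterHadamard k).mulVec (xNat k)‖ ≤ Real.sqrt 2 * Real.sqrt (2 ^ k) ∧
    Real.sqrt 2 * Real.sqrt (2 ^ k) = 2 ^ ((k + 1) / 2) := by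
  obtain ⟨m, rfl⟩ := hk
  have hsqrt : √2 * √(2 ^ (2 * m + 1)) = (2 : ℝ) ^ (m + 1) := by
    rw [← Real.sqrt_mul zero_le_two, ← pow_succ', show 2 * m + 1 + 1 = 2 * (m + 1) by ring,
      pow_mul', Real.sqrt_sq (by positivity)]
  refine ⟨fun x hx => hx.sqrt_le_norm_mulVec (transpose_sylvesterHadamard_mul_self _),
    isSignVec_xNat _, ?_, ?_⟩
  · rw [hsqrt, norm_sylvesterHadamard_mulVec_xNat_odd]
  · rw [hsqrt, show (2 * m + 1 + 1) / 2 = m + 1 by omega]
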